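/- For every n ≥ 1 and every 2-clumped permutation π ∈ S'_{n−1}, both c_1(π) and c_n(π) are 2-clumped, i.e., {c_1(π), c_n(π) : π ∈ S'_{n−1}} ⊆ S'_n. Consequently (together with S'_0 = {ε} and S'_{n−1} = {p(π) : π ∈ S'_n}), the set S'_n of 2-clumped permutations is a zigzag language for every n ≥ 0. -/

import Mathlib

/-!
Shared definitions: permutations in one-line notation as lists of naturals,
deletion `p`, insertion `c_i`, zigzag languages, the Gray code sequence `J(L_n)`,
jumps, minimal jumps, the auxiliary sequences `s_n^π`, Algorithm M,
vincular pattern containment and 2-clumped permutations.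
-/

/-- `S_n`: permutations of `{1,…,n}` in one-line notation, as lists of naturals. -/
def SymmList (n : ℕ) : Set (List ℕ) := {l | List.Perm l (List.range' 1 n)}

/-- The identity permutation `id_n = 1 2 ⋯ n`. -/
def idPerm (n : ℕ) : List ℕ := List.range' 1 n

/-- `p(π)`: delete the largest entry `n = π.length` from the permutation `π ∈ S_n`. -/
def pdel (l : List ℕ) : List ℕ := l.erase l.length

/-- `c_i(π)`: insert the new largest value `π.length + 1` at (1-indexed) position `i`. -/
def cins (i : ℕ) (l : List ℕ) : List ℕ :=
  l.take (i - 1) ++ (l.length + 1) :: l.drop (i - 1)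

/-- Zigzag languages of permutations: `L_0 = {ε}` is a zigzag language, and
`L ⊆ S_{n+1}` is a zigzag language if `p(L)` is a zigzag language and
`c_1(π), c_{n+1}(π) ∈ L` for every `π ∈ p(L)`. -/
inductive IsZigzag : ℕ → Set (List ℕ) → Prop
  | zero : IsZigzag 0 {[]}
  | succ (n : ℕ) (L : Set (List ℕ)) :
      L ⊆ SymmList (n + 1) →
      IsZigzag n (pdel '' L) →
      (∀ l ∈ pdel '' L, cins 1 l ∈ L ∧ cins (n + 1) l ∈ L) →
      IsZigzag (n + 1) L

/-- `→c(π)`: the sequence of those `c_1(π),…,c_n(π)` lying in `L`,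
in increasing order of the insertion position. -/
noncomputable def cSeq (L : Set (List ℕ)) (n : ℕ) (l : List ℕ) : List (List ℕ) :=
  ((List.range' 1 n).map (fun i => cins i l)).filter
    (fun x => @decide (x ∈ L) (Classical.propDecidable _))

/-- The Gray code sequence `J(L_n)` of a language `L ⊆ S_n`:
`J(L_0) = ε`, and `J(L_{n+1})` is obtained from `J(L_n)` (for the language
`p(L)`) by replacing its entries alternately by `←c(π)` (the reverse of
`→c(π)`) and `→c(π)`. -/
noncomputable def Jseq : ℕ → Set (List ℕ) → List (List ℕ)
  | 0, _ => [[]]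
  | (n + 1), L =>
      (((Jseq n (pdel '' L)).mapIdx
        (fun k π => if k % 2 = 0 then (cSeq L (n + 1) π).reverse
                    else cSeq L (n + 1) π)).flatten)

/-- `ρ` is obtained from `π` by a right jump of the value `v` by `d` steps. -/
def RightJump (π ρ : List ℕ) (v d : ℕ) : Prop :=
  0 < d ∧ ∃ A B C : List ℕ, B.length = d ∧ (∀ x ∈ B, x < v) ∧
    π = A ++ v :: (B ++ C) ∧ ρ = A ++ (B ++ v :: C)

/-- `ρ` is obtained from `π` by a left jump of the value `v` by `d` steps. -/
def LeftJump (π ρ : List ℕ) (v d : ℕ) : Prop := RightJump ρ π v d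

/-- A right jump that is minimal with respect to `L`: every right jump of the
same value by fewer steps yields a permutation not in `L`. -/
def MinimalRightJump (L : Set (List ℕ)) (π ρ : List ℕ) (v d : ℕ) : Prop :=
  RightJump π ρ v d ∧ ∀ d' ρ', d' < d → RightJump π ρ' v d' → ρ' ∉ L

/-- A left jump that is minimal with respect to `L`. -/
def MinimalLeftJump (L : Set (List ℕ)) (π ρ : List ℕ) (v d : ℕ) : Prop :=
  LeftJump π ρ v d ∧ ∀ d' ρ', d' < d → LeftJump π ρ' v d' → ρ' ∉ L

/-- The auxiliary sequence `s_n^π` of a permutation `π` occurring in `J(L_n)`,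
as a function of the index `i ∈ {1,…,n}` (value `0` outside this range). -/
noncomputable def sVec : ℕ → Set (List ℕ) → List ℕ → ℕ → ℕ
  | 0, _, _, _ => 0
  | 1, _, _, i => if i = 1 then 1 else 0
  | (n + 2), L, π, i =>
      let L' := pdel '' L
      let π' := pdel π
      let cbar := if ((Jseq (n + 1) L').idxOf π') % 2 = 0
                  then (cSeq L (n + 2) π').reverse else cSeq L (n + 2) π'
      if cbar.getLast? = some π then
        (if i ≤ n then sVec (n + 1) L' π' i
         else if i = n + 1 then n + 1
         else if i = n + 2 then sVec (n + 1) L' π' (n + 1) else 0)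
      else
        (if i ≤ n + 1 then sVec (n + 1) L' π' i
         else if i = n + 2 then n + 2 else 0)

/-- `j` is at the first position of `l`, or the entry immediately left of `j`
in `l` is larger than `j`. -/
def AtLeftTurn (l : List ℕ) (j : ℕ) : Prop :=
  ∃ A B : List ℕ, l = A ++ j :: B ∧ (A = [] ∨ ∃ x, A.getLast? = some x ∧ j < x)

/-- `j` is at the last position of `l`, or the entry immediately right of `j`
in `l` is larger than `j`. -/
def AtRightTurn (l : List ℕ) (j : ℕ) : Prop :=
  ∃ A B : List ℕ, l = A ++ j :: B ∧ (B = [] ∨ ∃ x, B.head? = some x ∧ j < x)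

/-- `j` is not at the first position of `l`, and the entry immediately left of
`j` in `l` is smaller than `j`. -/
def SmallerLeftNeighbor (l : List ℕ) (j : ℕ) : Prop :=
  ∃ A B : List ℕ, ∃ x, l = A ++ j :: B ∧ A.getLast? = some x ∧ x < j

/-- `j` is not at the last position of `l`, and the entry immediately right of
`j` in `l` is smaller than `j`. -/
def SmallerRightNeighbor (l : List ℕ) (j : ℕ) : Prop :=
  ∃ A B : List ℕ, ∃ x, l = A ++ j :: B ∧ B.head? = some x ∧ x < j

/-- A state of Algorithm M: the current permutation `π` and the auxiliary
arrays `o` and `s`; `o j = false` encodes direction `L` (left) and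
`o j = true` encodes `R` (right). -/
structure MState where
  perm : List ℕ
  o : ℕ → Bool
  s : ℕ → ℕ

/-- The initial state of Algorithm M (step M1): `π = id_n`, `o_j = L`, `s_j = j`. -/
def MInit (n : ℕ) : MState := ⟨idPerm n, fun _ => false, fun j => j⟩

/-- One iteration (steps M3–M5) of Algorithm M on a language `L ⊆ S_n`:
with `j := s_n ≠ 1`, the permutation jumps minimally in the direction `o_j`
(step M4), and the arrays `o`, `s` are updated as in step M5. -/
def MStep (L : Set (List ℕ)) (n : ℕ) (σ σ' : MState) : Prop :=
  σ.s n ≠ 1 ∧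
  σ'.perm ∈ L ∧
  ((σ.o (σ.s n) = false ∧ ∃ d, MinimalLeftJump L σ.perm σ'.perm (σ.s n) d) ∨
   (σ.o (σ.s n) = true ∧ ∃ d, MinimalRightJump L σ.perm σ'.perm (σ.s n) d)) ∧
  (((σ.o (σ.s n) = false ∧ AtLeftTurn σ'.perm (σ.s n)) ∨
    (σ.o (σ.s n) = true ∧ AtRightTurn σ'.perm (σ.s n))) →
      σ'.o = Function.update σ.o (σ.s n) (!σ.o (σ.s n)) ∧
      σ'.s = Function.update (Function.update (Function.update σ.s n n) (σ.s n)
               ((Function.update σ.s n n) (σ.s n - 1))) (σ.s n - 1) (σ.s n - 1)) ∧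
  (¬ ((σ.o (σ.s n) = false ∧ AtLeftTurn σ'.perm (σ.s n)) ∨
      (σ.o (σ.s n) = true ∧ AtRightTurn σ'.perm (σ.s n))) →
      σ'.o = σ.o ∧ σ'.s = Function.update σ.s n n)

/-- `π` contains the vincular pattern `pat` whose marked adjacent pair starts
at (0-indexed) position `k` of `pat`. -/
def ContainsVincular (π pat : List ℕ) (k : ℕ) : Prop :=
  ∃ f : ℕ → ℕ, StrictMonoOn f (Set.Iio pat.length) ∧
    (∀ i < pat.length, f i < π.length) ∧
    f (k + 1) = f k + 1 ∧
    (∀ i < pat.length, ∀ j < pat.length,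
      (pat.getD i 0 < pat.getD j 0 ↔ π.getD (f i) 0 < π.getD (f j) 0))

/-- 2-clumped permutations: those avoiding the vincular patterns
`3(51)24`, `3(51)42`, `24(51)3` and `42(51)3`. -/
def TwoClumped (π : List ℕ) : Prop :=
  ¬ ContainsVincular π [3, 5, 1, 2, 4] 1 ∧ ¬ ContainsVincular π [3, 5, 1, 4, 2] 1 ∧
  ¬ ContainsVincular π [2, 4, 5, 1, 3] 2 ∧ ¬ ContainsVincular π [4, 2, 5, 1, 3] 2

/-- `S'_n`: the set of 2-clumped permutations in `S_n`. -/
def SClump (n : ℕ) : Set (List ℕ) := {l ∈ SymmList n | TwoClumped l}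

/-- `B_n`: the permutations obtained from `1` by repeatedly inserting the new
largest value at the first or the last position. -/
def Bset : ℕ → Set (List ℕ)
  | 0 => {[]}
  | 1 => {[1]}
  | (n + 2) => {l | ∃ π ∈ Bset (n + 1), l = cins 1 π ∨ l = cins (n + 2) π}

/-!
In each of the four patterns the maximum is the first entry of the marked pair, and that entry
is neither the first nor the last one of the pattern. So a new maximum placed at either end of a
permutation cannot take part in an occurrence, which gives `c_1` and `c_n`. Conversely, deleting
the maximum from a 2-clumped permutation keeps it 2-clumped: an occurrence in `p(π)` survives the
reinsertion of the maximum unless its marked pair straddles the insertion point, and then the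
maximum itself can play the role of the pattern's maximum.
-/

namespace List

variable {α : Type*}

theorem getD_append_cons_shift (A B : List α) (x d : α) (p : ℕ) :
    (A ++ x :: B).getD (if p < A.length then p else p + 1) d = (A ++ B).getD p d := by
  split_ifs with h
  · rw [getD_append _ _ _ _ h, getD_append _ _ _ _ h]
  · rw [getD_append_right _ _ _ _ (by omega), getD_append_right _ _ _ _ (by omega),
      show p + 1 - A.length = p - A.length + 1 by omega, getD_cons_succ]

theorem getD_append_cons_of_ne (A B : List α) (x d : α) {p : ℕ} (hp : p ≠ A.length) :
    (A ++ x :: B).getD p d = (A ++ B).getD (if p < A.length then p else p - 1) d := by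
  rw [← getD_append_cons_shift A B x d]
  congr 1
  split_ifs <;> omega

theorem getD_lt_of_forall_mem_lt [LT α] {l : List α} {m d : α} {p : ℕ} (h : ∀ y ∈ l, y < m)
    (hp : p < l.length) : l.getD p d < m := by
  rw [getD_eq_getElem l d hp]
  exact h _ (getElem_mem hp)

theorem lt_length_of_lt_getD {l : List ℕ} {a k : ℕ} (h : a < l.getD k 0) : k < l.length := by
  by_contra hk
  rw [getD_eq_default _ _ (not_lt.1 hk)] at h
  omega

end List

open List

structure VincularOccurrence (π pat : List ℕ) (k : ℕ) (f : ℕ → ℕ) : Prop where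
  strictMonoOn : StrictMonoOn f (Set.Iio pat.length)
  lt_length : ∀ i < pat.length, f i < π.length
  adjacent : f (k + 1) = f k + 1
  lt_iff_lt : ∀ i < pat.length, ∀ j < pat.length,
    (pat.getD i 0 < pat.getD j 0 ↔ π.getD (f i) 0 < π.getD (f j) 0)

theorem containsVincular_iff {π pat : List ℕ} {k : ℕ} :
    ContainsVincular π pat k ↔ ∃ f, VincularOccurrence π pat k f :=
  ⟨fun ⟨f, h₁, h₂, h₃, h₄⟩ => ⟨f, ⟨h₁, h₂, h₃, h₄⟩⟩,
    fun ⟨f, ⟨h₁, h₂, h₃, h₄⟩⟩ => ⟨f, h₁, h₂, h₃, h₄⟩⟩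

namespace VincularOccurrence

variable {A B pat : List ℕ} {k : ℕ} {f : ℕ → ℕ}

theorem insert (hf : VincularOccurrence (A ++ B) pat k f) (hk : f k + 1 ≠ A.length) (x : ℕ) :
    VincularOccurrence (A ++ x :: B) pat k
      (fun i => if f i < A.length then f i else f i + 1) := by
  have hshift : StrictMono fun p => if p < A.length then p else p + 1 := by
    intro p q hpq
    simp only
    split_ifs <;> omega
  refine ⟨hshift.comp_strictMonoOn hf.strictMonoOn, fun i hi => ?_, ?_, fun i hi j hj => ?_⟩
  · have := hf.lt_length i hi
    simp only [length_append, length_cons] at this ⊢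
    split_ifs <;> omega
  · have := hf.adjacent
    split_ifs <;> omega
  · rw [getD_append_cons_shift, getD_append_cons_shift]
    exact hf.lt_iff_lt i hi j hj

theorem erase {x : ℕ} (hf : VincularOccurrence (A ++ x :: B) pat k f)
    (hk : k + 1 < pat.length) (hA : ∀ i < pat.length, f i ≠ A.length) :
    VincularOccurrence (A ++ B) pat k
      (fun i => if f i < A.length then f i else f i - 1) := by
  refine ⟨fun i hi j hj hij => ?_, fun i hi => ?_, ?_, fun i hi j hj => ?_⟩
  · have := hf.strictMonoOn hi hj hij
    have := hA i hi
    have := hA j hj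
    split_ifs <;> omega
  · have hlt := hf.lt_length i hi
    have := hA i hi
    simp only [length_append, length_cons] at hlt ⊢
    split_ifs <;> omega
  · have := hf.adjacent
    have := hA k (by omega)
    have := hA (k + 1) hk
    split_ifs <;> omega
  · rw [← getD_append_cons_of_ne A B x 0 (hA i hi), ← getD_append_cons_of_ne A B x 0 (hA j hj)]
    exact hf.lt_iff_lt i hi j hj




theorem eq_of_apply_eq_length {m : ℕ} (hf : VincularOccurrence (A ++ m :: B) pat k f)
    (hm : ∀ y ∈ A ++ B, y < m) (hmax : ∀ j < pat.length, j ≠ k → pat.getD j 0 < pat.getD k 0)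
    {i : ℕ} (hi : i < pat.length) (hfi : f i = A.length) : i = k := by
  by_contra hik
  have hpat := hmax i hi hik
  have hk := lt_length_of_lt_getD hpat
  have hfk : f k ≠ A.length := hfi ▸ hf.strictMonoOn.injOn.ne hk hi (Ne.symm hik)
  have hval := (hf.lt_iff_lt i hi k hk).1 hpat
  have hlen := hf.lt_length k hk
  rw [hfi, getD_append_right _ _ _ _ le_rfl, Nat.sub_self, getD_cons_zero,
    getD_append_cons_of_ne _ _ _ _ hfk] at hval
  have := getD_lt_of_forall_mem_lt (d := 0) hm (p := if f k < A.length then f k else f k - 1)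
    (by simp only [length_append, length_cons] at hlen ⊢; split_ifs <;> omega)
  omega

theorem replace_max {a x : ℕ} (hf : VincularOccurrence (A ++ a :: B) pat k f)
    (hmax : ∀ j < pat.length, j ≠ k → pat.getD j 0 < pat.getD k 0) (hfk : f k = A.length)
    (hx : ∀ y ∈ A ++ a :: B, y < x) :
    VincularOccurrence (A ++ x :: B) pat k f := by
  have hne : ∀ j < pat.length, j ≠ k → f j ≠ A.length := fun j hj hjk hfj =>
    hjk (hf.strictMonoOn.injOn hj (lt_length_of_lt_getD (hmax j hj hjk)) (hfj.trans hfk.symm))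
  have hother : ∀ j < pat.length, j ≠ k →
      (A ++ x :: B).getD (f j) 0 = (A ++ a :: B).getD (f j) 0 := fun j hj hjk => by
    rw [getD_append_cons_of_ne _ _ _ _ (hne j hj hjk), getD_append_cons_of_ne _ _ _ _ (hne j hj hjk)]
  have hlt : ∀ j < pat.length, (A ++ a :: B).getD (f j) 0 < x := fun j hj =>
    getD_lt_of_forall_mem_lt hx (hf.lt_length j hj)
  have hxk : (A ++ x :: B).getD (f k) 0 = x := by
    rw [hfk, getD_append_right _ _ _ _ le_rfl, Nat.sub_self, getD_cons_zero]
  refine ⟨hf.strictMonoOn, fun i hi => ?_, hf.adjacent, fun i hi j hj => ?_⟩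
  · simpa using hf.lt_length i hi
  · rcases eq_or_ne i k with rfl | hik
    · rcases eq_or_ne j i with rfl | hji
      · simp
      · rw [hxk, hother j hj hji]
        exact iff_of_false (hmax j hj hji).asymm (hlt j hj).asymm
    · rcases eq_or_ne j k with rfl | hjk
      · rw [hxk, hother i hi hik]
        exact iff_of_true (hmax i hi hik) (hlt i hi)
      · rw [hother i hi hik, hother j hj hjk]
        exact hf.lt_iff_lt i hi j hj

end VincularOccurrence

namespace ContainsVincular

variable {π pat : List ℕ} {k : ℕ}

theorem append_cons {A B : List ℕ} {v : ℕ} (hv : ∀ y ∈ A ++ B, y < v)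
    (hmax : ∀ j < pat.length, j ≠ k → pat.getD j 0 < pat.getD k 0)
    (h : ContainsVincular (A ++ B) pat k) : ContainsVincular (A ++ v :: B) pat k := by
  obtain ⟨f, hf⟩ := containsVincular_iff.1 h
  rw [containsVincular_iff]
  by_cases hsplit : f k + 1 = A.length
  · -- `v` goes between the two marked entries: it takes over the role of the first one
    obtain ⟨A, a, rfl⟩ := (eq_nil_or_concat A).resolve_left (by rintro rfl; simp at hsplit)
    simp only [concat_eq_append, length_append, length_singleton, Nat.add_right_cancel_iff]
      at hsplit
    simp only [concat_eq_append, append_assoc, singleton_append] at hf hv ⊢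
    exact ⟨_, (hf.replace_max hmax hsplit hv).insert (by omega) a⟩
  · exact ⟨_, hf.insert hsplit v⟩

theorem of_cons {m : ℕ} (hm : ∀ y ∈ π, y < m)
    (hmax : ∀ j < pat.length, j ≠ k → pat.getD j 0 < pat.getD k 0)
    (hk₀ : 0 < k) (hk : k + 1 < pat.length)
    (h : ContainsVincular (m :: π) pat k) : ContainsVincular π pat k := by
  obtain ⟨f, hf⟩ := containsVincular_iff.1 h
  replace hf : VincularOccurrence ([] ++ m :: π) pat k f := hf
  have hunused : ∀ i < pat.length, f i ≠ ([] : List ℕ).length := by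
    intro i hi hfi
    obtain rfl := hf.eq_of_apply_eq_length hm hmax hi hfi
    have := hf.strictMonoOn (Set.mem_Iio.2 (by omega : 0 < pat.length)) hi hk₀
    simp only [length_nil] at hfi
    omega
  exact containsVincular_iff.2 ⟨_, hf.erase hk hunused⟩

theorem of_concat {m : ℕ} (hm : ∀ y ∈ π, y < m)
    (hmax : ∀ j < pat.length, j ≠ k → pat.getD j 0 < pat.getD k 0)
    (hk : k + 1 < pat.length)
    (h : ContainsVincular (π ++ [m]) pat k) : ContainsVincular π pat k := by
  obtain ⟨f, hf⟩ := containsVincular_iff.1 h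
  have hunused : ∀ i < pat.length, f i ≠ π.length := by
    intro i hi hfi
    obtain rfl := hf.eq_of_apply_eq_length (by simpa using hm) hmax hi hfi
    have := hf.lt_length (i + 1) hk
    simp only [hf.adjacent, hfi, length_append, length_singleton] at this
    omega
  rw [← append_nil π]
  exact containsVincular_iff.2 ⟨_, hf.erase hk hunused⟩

end ContainsVincular

namespace TwoClumped

variable {π : List ℕ}

theorem of_containsVincular_imp {σ : List ℕ} (hπ : TwoClumped π)
    (h : ∀ pat k, 0 < k → k + 1 < pat.length →
      (∀ j < pat.length, j ≠ k → pat.getD j 0 < pat.getD k 0) →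
      ContainsVincular σ pat k → ContainsVincular π pat k) :
    TwoClumped σ := by
  obtain ⟨h₁, h₂, h₃, h₄⟩ := hπ
  exact ⟨fun hc => h₁ (h _ _ (by decide) (by decide) (by decide) hc),
    fun hc => h₂ (h _ _ (by decide) (by decide) (by decide) hc),
    fun hc => h₃ (h _ _ (by decide) (by decide) (by decide) hc),
    fun hc => h₄ (h _ _ (by decide) (by decide) (by decide) hc)⟩

theorem nil : TwoClumped [] := by
  refine ⟨?_, ?_, ?_, ?_⟩ <;>
    exact fun ⟨_, _, hf, _⟩ => absurd (hf 0 (by decide)) (Nat.not_lt_zero _)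

theorem cons {m : ℕ} (hm : ∀ y ∈ π, y < m) (h : TwoClumped π) : TwoClumped (m :: π) :=
  h.of_containsVincular_imp fun _ _ hk₀ hk hmax => ContainsVincular.of_cons hm hmax hk₀ hk

theorem concat {m : ℕ} (hm : ∀ y ∈ π, y < m) (h : TwoClumped π) : TwoClumped (π ++ [m]) :=
  h.of_containsVincular_imp fun _ _ _ hk hmax => ContainsVincular.of_concat hm hmax hk

theorem of_append_cons {A B : List ℕ} {v : ℕ} (hv : ∀ y ∈ A ++ B, y < v)
    (h : TwoClumped (A ++ v :: B)) : TwoClumped (A ++ B) :=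
  h.of_containsVincular_imp fun _ _ _ _ hmax => ContainsVincular.append_cons hv hmax

end TwoClumped

section SymmList

variable {l A B : List ℕ} {n : ℕ}

theorem length_of_mem_symmList (h : l ∈ SymmList n) : l.length = n := by
  simpa using h.length_eq

theorem lt_of_mem_symmList (h : l ∈ SymmList n) {x : ℕ} (hx : x ∈ l) : x < n + 1 := by
  have := h.mem_iff.1 hx
  rw [mem_range'_1] at this
  omega

theorem cons_mem_symmList (h : l ∈ SymmList n) : (n + 1) :: l ∈ SymmList (n + 1) := by
  show _ ~ _
  rw [range'_1_concat, Nat.add_comm 1 n]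
  exact (h.cons _).trans (perm_append_singleton _ _).symm

theorem concat_mem_symmList (h : l ∈ SymmList n) : l ++ [n + 1] ∈ SymmList (n + 1) := by
  show _ ~ _
  rw [range'_1_concat, Nat.add_comm 1 n]
  exact h.append_right _

theorem append_mem_symmList_of_append_cons (h : A ++ (n + 1) :: B ∈ SymmList (n + 1)) :
    A ++ B ∈ SymmList n := by
  have : (n + 1) :: (A ++ B) ~ (n + 1) :: range' 1 n := by
    refine perm_middle.symm.trans (h.trans ?_)
    rw [range'_1_concat, Nat.add_comm 1 n]
    exact perm_append_singleton _ _
  exact this.cons_inv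

theorem cins_one (l : List ℕ) : cins 1 l = (l.length + 1) :: l := by
  simp [cins]

theorem cins_length_add_one (l : List ℕ) : cins (l.length + 1) l = l ++ [l.length + 1] := by
  simp [cins]

theorem pdel_cins_one (l : List ℕ) : pdel (cins 1 l) = l := by
  rw [cins_one, pdel, length_cons, erase_cons_head]

theorem pdel_append_cons (h : A ++ B ∈ SymmList n) : pdel (A ++ (n + 1) :: B) = A ++ B := by
  have hA : n + 1 ∉ A := fun hn =>
    (lt_of_mem_symmList h (mem_append_left B hn)).ne rfl
  have hlen : (A ++ (n + 1) :: B).length = n + 1 := by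
    have := length_of_mem_symmList h
    simp only [length_append, length_cons] at this ⊢
    omega
  rw [pdel, hlen, erase_append_right _ hA, erase_cons_head]

end SymmList

theorem cins_mem_SClump {n : ℕ} {π : List ℕ} (h : π ∈ SClump n) :
    cins 1 π ∈ SClump (n + 1) ∧ cins (n + 1) π ∈ SClump (n + 1) := by
  obtain ⟨hs, hc⟩ := h
  have hm : ∀ y ∈ π, y < n + 1 := fun _ => lt_of_mem_symmList hs
  obtain rfl := length_of_mem_symmList hs
  rw [cins_one, cins_length_add_one]
  exact ⟨⟨cons_mem_symmList hs, hc.cons hm⟩, ⟨concat_mem_symmList hs, hc.concat hm⟩⟩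

theorem SClump_zero : SClump 0 = {[]} := by
  ext l
  simp only [SClump, SymmList, range'_zero, perm_nil, Set.mem_ofPred_eq, Set.mem_singleton_iff,
    and_iff_left_iff_imp]
  rintro rfl
  exact TwoClumped.nil

theorem pdel_image_SClump (n : ℕ) : pdel '' SClump (n + 1) = SClump n := by
  ext l
  constructor
  · rintro ⟨π, ⟨hs, hc⟩, rfl⟩
    obtain ⟨A, B, rfl⟩ := append_of_mem (a := n + 1) (hs.mem_iff.2 (by simp))
    have hAB := append_mem_symmList_of_append_cons hs
    rw [pdel_append_cons hAB]
    exact ⟨hAB, hc.of_append_cons fun _ => lt_of_mem_symmList hAB⟩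
  · intro hl
    exact ⟨cins 1 l, (cins_mem_SClump hl).1, pdel_cins_one l⟩

theorem isZigzag_SClump (n : ℕ) : IsZigzag n (SClump n) := by
  induction n with
  | zero => exact SClump_zero ▸ .zero
  | succ n ih =>
    refine .succ n _ (fun _ hl => hl.1) ?_ ?_ <;> rw [pdel_image_SClump]
    · exact ih
    · exact fun _ => cins_mem_SClump

/-- For every `n ≥ 1` and every 2-clumped permutation
`π ∈ S'_{n−1}`, both `c_1(π)` and `c_n(π)` are 2-clumped. Consequently
(together with `S'_0 = {ε}` and `S'_{n−1} = {p(π) : π ∈ S'_n}`), the set `S'_n`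
of 2-clumped permutations is a zigzag language for every `n ≥ 0`. -/
theorem SClump_zigzag :
    (∀ n : ℕ, 1 ≤ n → ∀ π ∈ SClump (n - 1), cins 1 π ∈ SClump n ∧ cins n π ∈ SClump n) ∧
    (∀ n : ℕ, IsZigzag n (SClump n)) := by
  refine ⟨fun n hn π hπ => ?_, isZigzag_SClump⟩
  obtain ⟨m, rfl⟩ := Nat.exists_eq_add_of_le' hn
  exact cins_mem_SClump hπ
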